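/- arXiv:0803.0661 — 2 statements merged into one kernel-verified Lean document; each statement's English description precedes it below -/
import Mathlib

section
/- There is an absolute constant c such that for any DAG G with a unique sink and all vertices of indegree 0 or 2, and any d ≥ 1, the minimum clause space of a resolution refutation of Peb_G^d is at most Peb(G) + c, where Peb(G) is the black pebbling price of G. -/
/-- A clause: a finite set of literals, where a literal is a variable paired
with its polarity. -/
abbrev RClause (V : Type) := Finset (V × Bool)

/-- A clause configuration: a finite set of clauses. -/
abbrev RConfig (V : Type) := Finset (RClause V)

/-- A truth value assignment satisfies a clause if it satisfies some literal in it. -/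
def RClause.sat {V : Type} (α : V → Bool) (C : RClause V) : Prop :=
  ∃ l ∈ C, α l.1 = l.2

/-- A set of clauses logically implies a clause. -/
def CnfImplies {V : Type} (F : Set (RClause V)) (D : RClause V) : Prop :=
  ∀ α : V → Bool, (∀ C ∈ F, RClause.sat α C) → RClause.sat α D

/-- One step of resolution from a CNF formula `F`: axiom download, erasure,
or inference of a resolvent. -/
inductive ResStep {V : Type} [DecidableEq V] (F : Set (RClause V)) :
    RConfig V → RConfig V → Prop
  | download {C : RConfig V} {D : RClause V} (hD : D ∈ F) : ResStep F C (insert D C)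
  | delete {C : RConfig V} {D : RClause V} (hD : D ∈ C) : ResStep F C (C.erase D)
  | infer {C : RConfig V} {C₁ C₂ : RClause V} {x : V}
      (h₁ : C₁ ∈ C) (h₂ : C₂ ∈ C) (hx₁ : (x, true) ∈ C₁) (hx₂ : (x, false) ∈ C₂) :
      ResStep F C (insert (C₁.erase (x, true) ∪ C₂.erase (x, false)) C)

/-- A resolution derivation of the clause `A` from the CNF formula `F`. -/
structure ResDerivation {V : Type} [DecidableEq V] (F : Set (RClause V)) (A : RClause V) where
  len : ℕ
  cfg : ℕ → RConfig V
  init : cfg 0 = ∅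
  final : cfg len = {A}
  steps : ∀ t < len, ResStep F (cfg t) (cfg (t + 1))

/-- A resolution refutation of `F` is a derivation of the empty clause from `F`. -/
abbrev ResRefutation {V : Type} [DecidableEq V] (F : Set (RClause V)) :=
  ResDerivation F (∅ : RClause V)

namespace ResDerivation

variable {V : Type} [DecidableEq V] {F : Set (RClause V)} {A : RClause V}

/-- The clause space of a derivation: the maximal number of clauses in memory. -/
def space (π : ResDerivation F A) : ℕ :=
  (Finset.range (π.len + 1)).sup fun t => (π.cfg t).card

/-- The set of distinct clauses appearing in a derivation. -/
def clauses (π : ResDerivation F A) : Finset (RClause V) :=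
  (Finset.range (π.len + 1)).sup π.cfg

/-- The length of a derivation: the number of distinct clauses appearing in it. -/
def length (π : ResDerivation F A) : ℕ := π.clauses.card

/-- The width of a derivation: the size of a largest clause appearing in it. -/
def width (π : ResDerivation F A) : ℕ :=
  (Finset.range (π.len + 1)).sup fun t => (π.cfg t).sup Finset.card

/-- The variable space of a derivation: the maximal total number of literals in memory. -/
def varSpace (π : ResDerivation F A) : ℕ :=
  (Finset.range (π.len + 1)).sup fun t => ∑ C ∈ π.cfg t, C.card

end ResDerivation

/-- Minimum clause space of any resolution refutation of `F`. -/
noncomputable def spMin {V : Type} [DecidableEq V] (F : Set (RClause V)) : ℕ :=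
  sInf { s | ∃ π : ResRefutation F, π.space = s }

/-- Minimum variable space of any resolution refutation of `F`. -/
noncomputable def varSpMin {V : Type} [DecidableEq V] (F : Set (RClause V)) : ℕ :=
  sInf { s | ∃ π : ResRefutation F, π.varSpace = s }

/-- Minimum width of any resolution refutation of `F`. -/
noncomputable def widthMin {V : Type} [DecidableEq V] (F : Set (RClause V)) : ℕ :=
  sInf { w | ∃ π : ResRefutation F, π.width = w }

/-- The size of a CNF formula: total number of literals counted with repetition. -/
def cnfSize {V : Type} (F : Finset (RClause V)) : ℕ := ∑ C ∈ F, C.card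

/-- The set of variables occurring in a clause. -/
def clauseVars {V : Type} [DecidableEq V] (C : RClause V) : Finset V := C.image Prod.fst
/-- The clause `x(v)₁ ∨ ... ∨ x(v)_d`. -/
def posCl {V : Type} [DecidableEq V] (d : ℕ) (v : V) : RClause (V × Fin d) :=
  (Finset.univ : Finset (Fin d)).image fun j => ((v, j), true)
/-- A DAG with a unique sink in which every vertex has indegree `0` (the
sources) or `2`. `pred v` is the finite set of immediate predecessors of `v`;
acyclicity is expressed by well-foundedness of the edge relation. -/
structure PebDag (V : Type) where
  pred : V → Finset V
  wf : WellFounded fun u v => u ∈ pred v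
  indeg : ∀ v, (pred v).card = 0 ∨ (pred v).card = 2
  sink : V
  sink_unique : ∀ v, (∀ w, v ∉ pred w) ↔ v = sink

/-- The `d`-th degree pebbling contradiction `Peb_G^d`: source axioms,
pebbling axioms, and target axioms. -/
def pebCnf {V : Type} [DecidableEq V] (G : PebDag V) (d : ℕ) :
    Set (RClause (V × Fin d)) :=
  { C |
    (∃ s : V, G.pred s = ∅ ∧ C = posCl d s) ∨
    (∃ w u v : V, G.pred w = {u, v} ∧ u ≠ v ∧ ∃ i j : Fin d,
      C = insert ((u, i), false) (insert ((v, j), false) (posCl d w))) ∨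
    (∃ i : Fin d, C = {((G.sink, i), false)}) }

/-- The formula `*Peb_G^d`: the pebbling contradiction with the target axioms
removed. -/
def pebStarCnf {V : Type} [DecidableEq V] (G : PebDag V) (d : ℕ) :
    Set (RClause (V × Fin d)) :=
  { C |
    (∃ s : V, G.pred s = ∅ ∧ C = posCl d s) ∨
    (∃ w u v : V, G.pred w = {u, v} ∧ u ≠ v ∧ ∃ i j : Fin d,
      C = insert ((u, i), false) (insert ((v, j), false) (posCl d w))) }
/-- A move in the black pebble game: place a black pebble on a vertex all of
whose immediate predecessors are pebbled (in particular on any source), or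
remove a black pebble from any vertex. -/
inductive BMove {V : Type} [DecidableEq V] (pred : V → Finset V) :
    Finset V → Finset V → Prop
  | place {B : Finset V} {v : V} (h : pred v ⊆ B) : BMove pred B (insert v B)
  | remove {B : Finset V} {v : V} (h : v ∈ B) : BMove pred B (B.erase v)

/-- A complete black pebbling: starts with no pebbles and ends with a single
black pebble on the sink `z`. -/
structure BPebbling {V : Type} [DecidableEq V] (pred : V → Finset V) (z : V) where
  len : ℕ
  cfg : ℕ → Finset V
  init : cfg 0 = ∅
  final : cfg len = {z}
  steps : ∀ t < len, BMove pred (cfg t) (cfg (t + 1))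

/-- The cost of a black pebbling: the maximal number of pebbles used. -/
def BPebbling.cost {V : Type} [DecidableEq V] {pred : V → Finset V} {z : V}
    (P : BPebbling pred z) : ℕ :=
  (Finset.range (P.len + 1)).sup fun t => (P.cfg t).card

/-- The black pebbling price: the minimum cost of a complete black pebbling. -/
noncomputable def bPebPrice {V : Type} [DecidableEq V] (pred : V → Finset V) (z : V) : ℕ :=
  sInf { c | ∃ P : BPebbling pred z, P.cost = c }

section Aux

variable {V : Type} [DecidableEq V]

/-- Clause of positive literals `x_{k+1} ∨ ... ∨ x_d` on vertex `x` (0-based: indices ≥ k). -/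
def upos (d : ℕ) (x : V) (k : ℕ) : RClause (V × Fin d) :=
  (Finset.univ.filter fun m : Fin d => k ≤ m.val).image fun m => ((x, m), true)

lemma mem_upos {d k : ℕ} {x : V} {l : (V × Fin d) × Bool} :
    l ∈ upos d x k ↔ ∃ m : Fin d, k ≤ m.val ∧ l = ((x, m), true) := by
  simp [upos, eq_comm]

lemma mem_posCl {d : ℕ} {x : V} {l : (V × Fin d) × Bool} :
    l ∈ posCl d x ↔ ∃ m : Fin d, l = ((x, m), true) := by
  simp [posCl, eq_comm]

lemma upos_zero (d : ℕ) (x : V) : upos d x 0 = posCl d x := by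
  ext l; simp [mem_upos, mem_posCl]

lemma upos_top (d : ℕ) (x : V) : upos d x d = ∅ := by
  ext l
  simp only [mem_upos, Finset.notMem_empty, iff_false, not_exists]
  rintro m ⟨hm, rfl⟩
  exact absurd m.isLt (by omega)

lemma mem_upos_self {d k : ℕ} (hk : k < d) (x : V) :
    ((x, ⟨k, hk⟩), true) ∈ upos d x k := mem_upos.2 ⟨⟨k, hk⟩, le_refl _, rfl⟩

lemma upos_erase {d k : ℕ} (hk : k < d) (x : V) :
    (upos d x k).erase ((x, ⟨k, hk⟩), true) = upos d x (k + 1) := by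
  ext l
  simp only [Finset.mem_erase, mem_upos]
  constructor
  · rintro ⟨hne, m, hm, rfl⟩
    refine ⟨m, ?_, rfl⟩
    rcases Nat.lt_or_ge k m.val with h | h
    · omega
    · exact absurd (by congr 2; exact Fin.ext (show m.val = k by omega)) hne
  · rintro ⟨m, hm, rfl⟩
    refine ⟨fun heq => ?_, m, by omega, rfl⟩
    have hmk : m.val = k := by
      have := congrArg (fun l => l.1.2.val) heq
      simpa using this
    omega

lemma posCl_pos {d : ℕ} {x : V} {l : (V × Fin d) × Bool} (h : l ∈ posCl d x) : l.2 = true := by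
  rcases mem_posCl.1 h with ⟨m, rfl⟩; rfl

lemma posCl_vertex {d : ℕ} {x : V} {l : (V × Fin d) × Bool} (h : l ∈ posCl d x) : l.1.1 = x := by
  rcases mem_posCl.1 h with ⟨m, rfl⟩; rfl

lemma upos_pos {d k : ℕ} {x : V} {l : (V × Fin d) × Bool} (h : l ∈ upos d x k) : l.2 = true := by
  rcases mem_upos.1 h with ⟨m, _, rfl⟩; rfl

lemma upos_vertex {d k : ℕ} {x : V} {l : (V × Fin d) × Bool} (h : l ∈ upos d x k) : l.1.1 = x := by
  rcases mem_upos.1 h with ⟨m, _, rfl⟩; rfl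

lemma mem_posCl_self {d : ℕ} (hd : 0 < d) (x : V) : ((x, ⟨0, hd⟩), true) ∈ posCl d x :=
  mem_posCl.2 ⟨⟨0, hd⟩, rfl⟩

lemma posCl_injective {d : ℕ} (hd : 0 < d) :
    Function.Injective (posCl (V := V) d) := by
  intro x y h
  have := posCl_vertex (h ▸ mem_posCl_self hd x)
  exact this

end Aux
section Aux2

variable {V : Type} [DecidableEq V]

/-- Bounded-space reachability between clause configurations. -/
def Reach (F : Set (RClause V)) (s : ℕ) : RConfig V → RConfig V → Prop :=
  Relation.ReflTransGen fun C C' => ResStep F C C' ∧ C'.card ≤ s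

lemma Reach.trans {F : Set (RClause V)} {s : ℕ} {C₁ C₂ C₃ : RConfig V}
    (h₁ : Reach F s C₁ C₂) (h₂ : Reach F s C₂ C₃) : Reach F s C₁ C₃ :=
  Relation.ReflTransGen.trans h₁ h₂

lemma reach_refl {F : Set (RClause V)} {s : ℕ} {C : RConfig V} : Reach F s C C :=
  Relation.ReflTransGen.refl

lemma reach_download {F : Set (RClause V)} {s : ℕ} {C : RConfig V} {D : RClause V}
    (hD : D ∈ F) (hc : (insert D C).card ≤ s) : Reach F s C (insert D C) :=
  Relation.ReflTransGen.single ⟨ResStep.download hD, hc⟩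

lemma reach_delete {F : Set (RClause V)} {s : ℕ} {C : RConfig V} {D : RClause V}
    (hD : D ∈ C) (hc : C.card ≤ s) : Reach F s C (C.erase D) :=
  Relation.ReflTransGen.single ⟨ResStep.delete hD, le_trans (Finset.card_le_card (Finset.erase_subset _ _)) hc⟩

lemma reach_infer {F : Set (RClause V)} {s : ℕ} {C : RConfig V} {C₁ C₂ : RClause V} {x : V}
    (h₁ : C₁ ∈ C) (h₂ : C₂ ∈ C) (hx₁ : (x, true) ∈ C₁) (hx₂ : (x, false) ∈ C₂)
    (hc : (insert (C₁.erase (x, true) ∪ C₂.erase (x, false)) C).card ≤ s) :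
    Reach F s C (insert (C₁.erase (x, true) ∪ C₂.erase (x, false)) C) :=
  Relation.ReflTransGen.single ⟨ResStep.infer h₁ h₂ hx₁ hx₂, hc⟩

/-- `¬u_i ∨ ¬v_j ∨ x(w)₁ ∨ ... ∨ x(w)_d` : a pebbling axiom. -/
def axCl (d : ℕ) (u v w : V) (i j : Fin d) : RClause (V × Fin d) :=
  insert ((u, i), false) (insert ((v, j), false) (posCl d w))

/-- `¬v_j ∨ x(w)₁ ∨ ... ∨ x(w)_d`. -/
def negW (d : ℕ) (v w : V) (j : Fin d) : RClause (V × Fin d) :=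
  insert ((v, j), false) (posCl d w)

/-- Intermediate clause of the inner loop. -/
def qCl (d : ℕ) (u v w : V) (j : Fin d) (k : ℕ) : RClause (V × Fin d) :=
  upos d u k ∪ negW d v w j

/-- Intermediate clause of the outer loop. -/
def pCl (d : ℕ) (v w : V) (k : ℕ) : RClause (V × Fin d) :=
  upos d v k ∪ posCl d w

lemma ax_mem {G : PebDag V} {d : ℕ} {u v w : V} (hp : G.pred w = {u, v}) (huv : u ≠ v)
    (i j : Fin d) : axCl d u v w i j ∈ pebCnf G d :=
  Or.inr (Or.inl ⟨w, u, v, hp, huv, i, j, rfl⟩)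

lemma src_mem {G : PebDag V} {d : ℕ} {w : V} (hp : G.pred w = ∅) :
    posCl d w ∈ pebCnf G d := Or.inl ⟨w, hp, rfl⟩

lemma tgt_mem {G : PebDag V} {d : ℕ} (i : Fin d) :
    ({((G.sink, i), false)} : RClause (V × Fin d)) ∈ pebCnf G d :=
  Or.inr (Or.inr ⟨i, rfl⟩)

/-- A clause all of whose literals are positive. -/
def PosOnly {W : Type} (C : RClause W) : Prop := ∀ l ∈ C, l.2 = true

lemma posOnly_posCl {d : ℕ} (x : V) : PosOnly (posCl d x) := fun _ h => posCl_pos h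

lemma posOnly_pCl {d : ℕ} (v w : V) (k : ℕ) : PosOnly (pCl d v w k) := by
  intro l hl
  rcases Finset.mem_union.1 hl with h | h
  · exact upos_pos h
  · exact posCl_pos h

lemma ne_of_negLit {W : Type} {C D : RClause W} {a : W}
    (hC : PosOnly C) (ha : (a, false) ∈ D) : D ≠ C := by
  intro h; exact absurd (hC _ (h ▸ ha)) (by simp)

lemma negW_negLit {d : ℕ} (v w : V) (j : Fin d) : ((v, j), false) ∈ negW d v w j :=
  Finset.mem_insert_self _ _

lemma qCl_negLit {d : ℕ} (u v w : V) (j : Fin d) (k : ℕ) :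
    ((v, j), false) ∈ qCl d u v w j k :=
  Finset.mem_union_right _ (negW_negLit v w j)

lemma axCl_negLit {d : ℕ} (u v w : V) (i j : Fin d) : ((u, i), false) ∈ axCl d u v w i j :=
  Finset.mem_insert_self _ _

end Aux2
section Aux3

variable {V : Type} [DecidableEq V]

lemma notMem_posCl_of_ne {d : ℕ} {x y : V} {m : Fin d} {b : Bool} (h : x ≠ y) :
    ((x, m), b) ∉ posCl d y := by
  intro hm; exact h (by simpa using posCl_vertex hm)

lemma notMem_posCl_false {d : ℕ} {x y : V} {m : Fin d} :
    ((x, m), false) ∉ posCl d y := by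
  intro hm; simpa using posCl_pos hm

lemma notMem_negW_pos {d : ℕ} {x v w : V} {m : Fin d} {j : Fin d}
    (hxw : x ≠ w) : ((x, m), true) ∉ negW d v w j := by
  intro hm
  rcases Finset.mem_insert.1 hm with h | h
  · simp at h
  · exact notMem_posCl_of_ne hxw h

lemma ax_erase {d : ℕ} {u v w : V} (huv : u ≠ v) (huw : u ≠ w) (i j : Fin d) :
    (axCl d u v w i j).erase ((u, i), false) = negW d v w j := by
  apply Finset.erase_insert
  intro hm
  rcases Finset.mem_insert.1 hm with h | h
  · exact huv (by simpa using congrArg (fun l => l.1.1) h)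
  · exact notMem_posCl_false h

lemma qCl_erase {d k : ℕ} (hk : k < d) {u v w : V} (huv : u ≠ v) (huw : u ≠ w) (j : Fin d) :
    (qCl d u v w j k).erase ((u, ⟨k, hk⟩), true) = qCl d u v w j (k + 1) := by
  unfold qCl
  rw [Finset.erase_union_distrib, upos_erase hk,
    Finset.erase_eq_of_notMem (notMem_negW_pos huw)]

lemma negW_erase {d : ℕ} {v w : V} (hvw : v ≠ w) (j : Fin d) :
    (negW d v w j).erase ((v, j), false) = posCl d w :=
  Finset.erase_insert notMem_posCl_false

lemma notMem_posCl_true {d : ℕ} {x w : V} {m : Fin d} (hxw : x ≠ w) :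
    ((x, m), true) ∉ posCl d w := notMem_posCl_of_ne hxw

lemma pCl_erase {d k : ℕ} (hk : k < d) {v w : V} (hvw : v ≠ w) :
    (pCl d v w k).erase ((v, ⟨k, hk⟩), true) = pCl d v w (k + 1) := by
  unfold pCl
  rw [Finset.erase_union_distrib, upos_erase hk,
    Finset.erase_eq_of_notMem (notMem_posCl_true hvw)]

lemma qCl_top {d : ℕ} (u v w : V) (j : Fin d) : qCl d u v w j d = negW d v w j := by
  unfold qCl; rw [upos_top, Finset.empty_union]

lemma pCl_top {d : ℕ} (v w : V) : pCl d v w d = posCl d w := by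
  unfold pCl; rw [upos_top, Finset.empty_union]

lemma union_negW_qCl {d k : ℕ} (u v w : V) (j : Fin d) :
    qCl d u v w j k ∪ negW d v w j = qCl d u v w j k := by
  unfold qCl; rw [Finset.union_assoc, Finset.union_self]

lemma union_posCl_pCl {d k : ℕ} (v w : V) :
    pCl d v w k ∪ posCl d w = pCl d v w k := by
  unfold pCl; rw [Finset.union_assoc, Finset.union_self]

lemma mem_qCl_self {d k : ℕ} (hk : k < d) (u v w : V) (j : Fin d) :
    ((u, ⟨k, hk⟩), true) ∈ qCl d u v w j k :=
  Finset.mem_union_left _ (mem_upos_self hk u)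

lemma mem_pCl_self {d k : ℕ} (hk : k < d) (v w : V) :
    ((v, ⟨k, hk⟩), true) ∈ pCl d v w k :=
  Finset.mem_union_left _ (mem_upos_self hk v)

lemma qCl_ne_succ {d k : ℕ} (hk : k < d) {u v w : V} (huv : u ≠ v) (huw : u ≠ w) (j : Fin d) :
    qCl d u v w j k ≠ qCl d u v w j (k + 1) := by
  intro h
  have := h ▸ mem_qCl_self hk u v w j
  rcases Finset.mem_union.1 this with h' | h'
  · rcases mem_upos.1 h' with ⟨m, hm, he⟩
    have : m.val = k := by simpa [Fin.ext_iff] using (congrArg (fun l => l.1.2.val) he).symm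
    omega
  · exact notMem_negW_pos huw h'

lemma pCl_ne_succ {d k : ℕ} (hk : k < d) {v w : V} (hvw : v ≠ w) :
    pCl d v w k ≠ pCl d v w (k + 1) := by
  intro h
  have := h ▸ mem_pCl_self hk v w
  rcases Finset.mem_union.1 this with h' | h'
  · rcases mem_upos.1 h' with ⟨m, hm, he⟩
    have : m.val = k := by simpa [Fin.ext_iff] using (congrArg (fun l => l.1.2.val) he).symm
    omega
  · exact notMem_posCl_true hvw h'

/-- A clause whose literals all mention the same vertex. -/
def MonoV {d : ℕ} (C : RClause (V × Fin d)) : Prop := ∃ y : V, ∀ l ∈ C, l.1.1 = y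

lemma monoV_posCl {d : ℕ} (x : V) : MonoV (posCl d x) := ⟨x, fun _ h => posCl_vertex h⟩

lemma pCl_ne_mono {d k : ℕ} (hd : 0 < d) (hk : k < d) {v w : V} (hvw : v ≠ w)
    {C : RClause (V × Fin d)} (hC : MonoV C) : pCl d v w k ≠ C := by
  rintro rfl
  rcases hC with ⟨y, hy⟩
  have h1 : v = y := hy _ (mem_pCl_self hk v w)
  have h2 : w = y := hy _ (Finset.mem_union_right _ (mem_posCl_self hd w))
  exact hvw (h1.trans h2.symm)

end Aux3
section Aux4

variable {V : Type} [DecidableEq V]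

lemma notMem_of_posOnly {W : Type} {Base : RConfig W} {D : RClause W} {a : W}
    (hpos : ∀ C ∈ Base, PosOnly C) (ha : (a, false) ∈ D) : D ∉ Base :=
  fun h => ne_of_negLit (hpos D h) ha rfl

lemma notMem_qCl_negu {d k : ℕ} {u v w : V} {i j : Fin d} (huv : u ≠ v) :
    ((u, i), false) ∉ qCl d u v w j k := by
  intro h
  rcases Finset.mem_union.1 h with h | h
  · simpa using upos_pos h
  · rcases Finset.mem_insert.1 h with h | h
    · exact huv (by simpa using congrArg (fun l => l.1.1) h)
    · exact notMem_posCl_false h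

lemma ax_ne_qCl {d k : ℕ} {u v w : V} {i j : Fin d} (huv : u ≠ v) :
    axCl d u v w i j ≠ qCl d u v w j k :=
  fun he => notMem_qCl_negu huv (he ▸ axCl_negLit u v w i j)

lemma erase_insert2 {α : Type*} [DecidableEq α] {a b : α} {s : Finset α}
    (h1 : b ≠ a) (h2 : b ∉ s) : (insert a (insert b s)).erase b = insert a s := by
  rw [Finset.insert_comm]
  exact Finset.erase_insert (by simp [Finset.mem_insert, h1, h2])

lemma erase_insert_mid {α : Type*} [DecidableEq α] {a b c : α} {s : Finset α}
    (h1 : b ≠ a) (h2 : b ≠ c) (h3 : b ∉ s) :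
    (insert a (insert b (insert c s))).erase b = insert a (insert c s) := by
  rw [Finset.insert_comm a b]
  exact Finset.erase_insert (by simp [Finset.mem_insert, h1, h2, h3])

lemma card_insert1_le {α : Type*} [DecidableEq α] (a : α) (s : Finset α) :
    (insert a s).card ≤ s.card + 1 := Finset.card_insert_le _ _

lemma card_insert2_le {α : Type*} [DecidableEq α] (a b : α) (s : Finset α) :
    (insert a (insert b s)).card ≤ s.card + 2 :=
  le_trans (Finset.card_insert_le _ _) (by have := Finset.card_insert_le b s; omega)

lemma card_insert3_le {α : Type*} [DecidableEq α] (a b c : α) (s : Finset α) :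
    (insert a (insert b (insert c s))).card ≤ s.card + 3 :=
  le_trans (Finset.card_insert_le _ _) (by have := card_insert2_le b c s; omega)

/-- Inner loop: from a positive base containing `posCl u`, derive `¬v_j ∨ W`. -/
lemma inner_loop {G : PebDag V} {d s : ℕ} (hd : 0 < d) {u v w : V}
    (hp : G.pred w = {u, v}) (huv : u ≠ v) (huw : u ≠ w)
    {Base : RConfig (V × Fin d)} (hpos : ∀ C ∈ Base, PosOnly C) (hu : posCl d u ∈ Base)
    (j : Fin d) (hs : Base.card + 3 ≤ s) :
    Reach (pebCnf G d) s Base (insert (negW d v w j) Base) := by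
  have hQnotin : ∀ k, qCl d u v w j k ∉ Base :=
    fun k => notMem_of_posOnly hpos (qCl_negLit u v w j k)
  have hAxnotin : ∀ i, axCl d u v w i j ∉ Base :=
    fun i => notMem_of_posOnly hpos (axCl_negLit u v w i j)
  have key : ∀ k, (hk : k < d) →
      Reach (pebCnf G d) s Base (insert (qCl d u v w j (k + 1)) Base) := by
    intro k
    induction k with
    | zero =>
      intro hk
      set Ax := axCl d u v w ⟨0, hk⟩ j with hAx
      have r1 : Reach (pebCnf G d) s Base (insert Ax Base) :=
        reach_download (ax_mem hp huv _ j) (le_trans (card_insert1_le _ _) (by omega))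
      have hx₁ : ((u, (⟨0, hk⟩ : Fin d)), true) ∈ posCl d u := mem_posCl_self hk u
      have hx₂ : ((u, (⟨0, hk⟩ : Fin d)), false) ∈ Ax := axCl_negLit u v w _ j
      have r2 := reach_infer (F := pebCnf G d) (s := s) (x := (u, (⟨0, hk⟩ : Fin d)))
        (Finset.mem_insert_of_mem hu) (Finset.mem_insert_self Ax Base) hx₁ hx₂
        (le_trans (card_insert2_le _ _ _) (by omega))
      have hR : (posCl d u).erase ((u, (⟨0, hk⟩ : Fin d)), true) ∪ Ax.erase ((u, (⟨0, hk⟩ : Fin d)), false)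
          = qCl d u v w j 1 := by
        rw [← upos_zero, upos_erase hk, hAx, ax_erase huv huw]; rfl
      rw [hR] at r2
      have r3 := reach_delete (F := pebCnf G d) (s := s)
        (D := Ax) (C := insert (qCl d u v w j 1) (insert Ax Base))
        (Finset.mem_insert_of_mem (Finset.mem_insert_self _ _))
        (le_trans (card_insert2_le _ _ _) (by omega))
      rw [erase_insert2 (ax_ne_qCl huv) (hAxnotin _)] at r3
      exact (r1.trans r2).trans r3
    | succ k ih =>
      intro hk
      have r0 := ih (by omega)
      set Q := qCl d u v w j (k + 1) with hQ
      set Ax := axCl d u v w ⟨k + 1, hk⟩ j with hAx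
      have r1 : Reach (pebCnf G d) s (insert Q Base) (insert Ax (insert Q Base)) :=
        reach_download (ax_mem hp huv _ j) (le_trans (card_insert2_le _ _ _) (by omega))
      have hx₁ : ((u, (⟨k + 1, hk⟩ : Fin d)), true) ∈ Q := mem_qCl_self hk u v w j
      have hx₂ : ((u, (⟨k + 1, hk⟩ : Fin d)), false) ∈ Ax := axCl_negLit u v w _ j
      have r2 := reach_infer (F := pebCnf G d) (s := s) (x := (u, (⟨k + 1, hk⟩ : Fin d)))
        (Finset.mem_insert_of_mem (Finset.mem_insert_self Q Base))
        (Finset.mem_insert_self Ax _) hx₁ hx₂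
        (le_trans (card_insert3_le _ _ _ _) (by omega))
      have hR : Q.erase ((u, (⟨k + 1, hk⟩ : Fin d)), true) ∪ Ax.erase ((u, (⟨k + 1, hk⟩ : Fin d)), false)
          = qCl d u v w j (k + 2) := by
        rw [hQ, qCl_erase hk huv huw, hAx, ax_erase huv huw, union_negW_qCl]
      rw [hR] at r2
      have r3 := reach_delete (F := pebCnf G d) (s := s) (D := Ax)
        (C := insert (qCl d u v w j (k + 2)) (insert Ax (insert Q Base)))
        (Finset.mem_insert_of_mem (Finset.mem_insert_self _ _))
        (le_trans (card_insert3_le _ _ _ _) (by omega))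
      rw [erase_insert_mid (ax_ne_qCl huv) ((ax_ne_qCl huv).symm ∘ Eq.symm) (hAxnotin _)] at r3
      have r4 := reach_delete (F := pebCnf G d) (s := s) (D := Q)
        (C := insert (qCl d u v w j (k + 2)) (insert Q Base))
        (Finset.mem_insert_of_mem (Finset.mem_insert_self _ _))
        (le_trans (card_insert2_le _ _ _) (by omega))
      rw [erase_insert2 (qCl_ne_succ (k := k + 1) hk huv huw j) (hQnotin _)] at r4
      exact ((r0.trans r1).trans r2).trans (r3.trans r4)
  obtain ⟨e, rfl⟩ : ∃ e, d = e + 1 := ⟨d - 1, by omega⟩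
  have := key e (by omega)
  rwa [qCl_top] at this
end Aux4
section Aux5

variable {V : Type} [DecidableEq V]

/-- Outer loop: from a positive, mono-vertex base containing `posCl u` and `posCl v`,
derive `posCl w`. -/
lemma outer_loop {G : PebDag V} {d s : ℕ} (hd : 0 < d) {u v w : V}
    (hp : G.pred w = {u, v}) (huv : u ≠ v) (huw : u ≠ w) (hvw : v ≠ w)
    {Base : RConfig (V × Fin d)} (hpos : ∀ C ∈ Base, PosOnly C)
    (hmono : ∀ C ∈ Base, MonoV C)
    (hu : posCl d u ∈ Base) (hv : posCl d v ∈ Base) (hs : Base.card + 4 ≤ s) :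
    Reach (pebCnf G d) s Base (insert (posCl d w) Base) := by
  have hNnotin : ∀ j, negW d v w j ∉ Base :=
    fun j => notMem_of_posOnly hpos (negW_negLit v w j)
  have hNne : ∀ (j : Fin d) (k : ℕ), negW d v w j ≠ pCl d v w k :=
    fun j k => ne_of_negLit (posOnly_pCl v w k) (negW_negLit v w j)
  have key : ∀ k, (hk : k < d) →
      Reach (pebCnf G d) s Base (insert (pCl d v w (k + 1)) Base) := by
    intro k
    induction k with
    | zero =>
      intro hk
      set N := negW d v w ⟨0, hk⟩ with hN
      have r1 : Reach (pebCnf G d) s Base (insert N Base) :=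
        inner_loop hd hp huv huw hpos hu ⟨0, hk⟩ (by omega)
      have hx₁ : ((v, (⟨0, hk⟩ : Fin d)), true) ∈ posCl d v := mem_posCl_self hk v
      have hx₂ : ((v, (⟨0, hk⟩ : Fin d)), false) ∈ N := negW_negLit v w _
      have r2 := reach_infer (F := pebCnf G d) (s := s) (x := (v, (⟨0, hk⟩ : Fin d)))
        (Finset.mem_insert_of_mem hv) (Finset.mem_insert_self N Base) hx₁ hx₂
        (le_trans (card_insert2_le _ _ _) (by omega))
      have hR : (posCl d v).erase ((v, (⟨0, hk⟩ : Fin d)), true) ∪ N.erase ((v, (⟨0, hk⟩ : Fin d)), false)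
          = pCl d v w 1 := by
        rw [← upos_zero, upos_erase hk, hN, negW_erase hvw]; rfl
      rw [hR] at r2
      have r3 := reach_delete (F := pebCnf G d) (s := s) (D := N)
        (C := insert (pCl d v w 1) (insert N Base))
        (Finset.mem_insert_of_mem (Finset.mem_insert_self _ _))
        (le_trans (card_insert2_le _ _ _) (by omega))
      rw [erase_insert2 (hNne _ _) (hNnotin _)] at r3
      exact (r1.trans r2).trans r3
    | succ k ih =>
      intro hk
      have r0 := ih (by omega)
      set P := pCl d v w (k + 1) with hP
      set N := negW d v w ⟨k + 1, hk⟩ with hN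
      have hpos' : ∀ C ∈ insert P Base, PosOnly C := by
        intro C hC
        rcases Finset.mem_insert.1 hC with rfl | hC
        · exact posOnly_pCl v w (k + 1)
        · exact hpos C hC
      have r1 : Reach (pebCnf G d) s (insert P Base) (insert N (insert P Base)) :=
        inner_loop hd hp huv huw hpos' (Finset.mem_insert_of_mem hu) ⟨k + 1, hk⟩
          (le_trans (by have := card_insert1_le P Base; omega) (le_refl s))
      have hx₁ : ((v, (⟨k + 1, hk⟩ : Fin d)), true) ∈ P := mem_pCl_self hk v w
      have hx₂ : ((v, (⟨k + 1, hk⟩ : Fin d)), false) ∈ N := negW_negLit v w _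
      have r2 := reach_infer (F := pebCnf G d) (s := s) (x := (v, (⟨k + 1, hk⟩ : Fin d)))
        (Finset.mem_insert_of_mem (Finset.mem_insert_self P Base))
        (Finset.mem_insert_self N _) hx₁ hx₂
        (le_trans (card_insert3_le _ _ _ _) (by omega))
      have hR : P.erase ((v, (⟨k + 1, hk⟩ : Fin d)), true) ∪ N.erase ((v, (⟨k + 1, hk⟩ : Fin d)), false)
          = pCl d v w (k + 2) := by
        rw [hP, pCl_erase hk hvw, hN, negW_erase hvw, union_posCl_pCl]
      rw [hR] at r2
      have r3 := reach_delete (F := pebCnf G d) (s := s) (D := N)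
        (C := insert (pCl d v w (k + 2)) (insert N (insert P Base)))
        (Finset.mem_insert_of_mem (Finset.mem_insert_self _ _))
        (le_trans (card_insert3_le _ _ _ _) (by omega))
      rw [erase_insert_mid (hNne _ _) (hNne _ _) (hNnotin _)] at r3
      have r4 := reach_delete (F := pebCnf G d) (s := s) (D := P)
        (C := insert (pCl d v w (k + 2)) (insert P Base))
        (Finset.mem_insert_of_mem (Finset.mem_insert_self _ _))
        (le_trans (card_insert2_le _ _ _) (by omega))
      rw [erase_insert2 (pCl_ne_succ (k := k + 1) hk hvw)
        (fun h => pCl_ne_mono hd hk hvw (hmono _ h) rfl)] at r4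
      exact ((r0.trans r1).trans r2).trans (r3.trans r4)
  obtain ⟨e, rfl⟩ : ∃ e, d = e + 1 := ⟨d - 1, by omega⟩
  have := key e (by omega)
  rwa [pCl_top] at this

end Aux5
section Aux6

variable {V : Type} [DecidableEq V]

/-- The clause configuration corresponding to a pebbling configuration. -/
def conf (d : ℕ) (B : Finset V) : RConfig (V × Fin d) := B.image (posCl d)

lemma conf_empty (d : ℕ) : conf (V := V) d ∅ = ∅ := rfl

lemma conf_insert (d : ℕ) (w : V) (B : Finset V) :
    conf d (insert w B) = insert (posCl d w) (conf d B) := Finset.image_insert _ _ _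

lemma conf_card_le (d : ℕ) (B : Finset V) : (conf d B).card ≤ B.card :=
  Finset.card_image_le

lemma conf_pos {d : ℕ} {B : Finset V} : ∀ C ∈ conf d B, PosOnly C := by
  intro C hC
  rcases Finset.mem_image.1 hC with ⟨y, _, rfl⟩
  exact posOnly_posCl y

lemma conf_mono {d : ℕ} {B : Finset V} : ∀ C ∈ conf d B, MonoV C := by
  intro C hC
  rcases Finset.mem_image.1 hC with ⟨y, _, rfl⟩
  exact monoV_posCl y

lemma not_self_pred {G : PebDag V} (w : V) : w ∉ G.pred w := by
  have := (G.wf.isIrrefl (r := fun u v => u ∈ G.pred v)).irrefl w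
  exact this

/-- Simulation of one pebbling move by resolution. -/
lemma move_sim {G : PebDag V} {d s : ℕ} (hd : 0 < d) {B B' : Finset V}
    (hm : BMove G.pred B B') (h1 : B.card + 4 ≤ s) :
    Reach (pebCnf G d) s (conf d B) (conf d B') := by
  cases hm with
  | @place w h =>
    rw [conf_insert]
    rcases G.indeg w with h0 | h2
    · have hp : G.pred w = ∅ := Finset.card_eq_zero.1 h0
      exact reach_download (src_mem hp)
        (le_trans (card_insert1_le _ _) (by have := conf_card_le d B; omega))
    · obtain ⟨u, v, huv, hp⟩ := Finset.card_eq_two.1 h2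
      have hu_pred : u ∈ G.pred w := by rw [hp]; exact Finset.mem_insert_self _ _
      have hv_pred : v ∈ G.pred w := by rw [hp]; simp
      have hu : u ∈ B := h hu_pred
      have hv : v ∈ B := h hv_pred
      have huw : u ≠ w := by rintro rfl; exact not_self_pred _ hu_pred
      have hvw : v ≠ w := by rintro rfl; exact not_self_pred _ hv_pred
      exact outer_loop hd hp huv huw hvw conf_pos conf_mono
        (Finset.mem_image_of_mem _ hu) (Finset.mem_image_of_mem _ hv)
        (by have := conf_card_le d B; omega)
  | @remove v h =>
    have himg : conf d (B.erase v) = (conf d B).erase (posCl d v) :=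
      Finset.image_erase (posCl_injective hd) _ _
    rw [himg]
    exact reach_delete (Finset.mem_image_of_mem _ h)
      (by have := conf_card_le d B; omega)

lemma posOnly_upos {d k : ℕ} (x : V) : PosOnly (upos d x k) := fun _ h => upos_pos h

lemma upos_ne_succ {d k : ℕ} (hk : k < d) (x : V) : upos d x k ≠ upos d x (k + 1) := by
  intro h
  have := h ▸ mem_upos_self hk x
  rcases mem_upos.1 this with ⟨m, hm, he⟩
  have : m.val = k := by simpa [Fin.ext_iff] using (congrArg (fun l => l.1.2.val) he).symm
  omega

set_option maxHeartbeats 1000000 in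
/-- Endgame: from `{posCl z}`, derive the empty clause in space 3. -/
lemma endgame {G : PebDag V} {d s : ℕ} (hd : 0 < d) (hs : 3 ≤ s) :
    Reach (pebCnf G d) s {posCl d G.sink} {(∅ : RClause (V × Fin d))} := by
  set z := G.sink with hz
  have key : ∀ k, k ≤ d → Reach (pebCnf G d) s {posCl d z} {upos d z k} := by
    intro k
    induction k with
    | zero => intro _; rw [upos_zero]; exact reach_refl
    | succ k ih =>
      intro hk1
      have hk : k < d := by omega
      have r0 := ih (by omega)
      set T : RClause (V × Fin d) := {((z, ⟨k, hk⟩), false)} with hT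
      have hTmem : T ∈ pebCnf G d := tgt_mem ⟨k, hk⟩
      have r1 : Reach (pebCnf G d) s ({upos d z k} : RConfig (V × Fin d))
          (insert T {upos d z k}) :=
        reach_download hTmem (le_trans (card_insert1_le _ _) (by simp; omega))
      have hx₁ : ((z, (⟨k, hk⟩ : Fin d)), true) ∈ upos d z k := mem_upos_self hk z
      have hx₂ : ((z, (⟨k, hk⟩ : Fin d)), false) ∈ T := Finset.mem_singleton_self _
      have r2 := reach_infer (F := pebCnf G d) (s := s) (x := (z, (⟨k, hk⟩ : Fin d)))
        (C := insert T {upos d z k})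
        (Finset.mem_insert_of_mem (Finset.mem_singleton_self _))
        (Finset.mem_insert_self _ _) hx₁ hx₂
        (le_trans (card_insert2_le _ _ _) (by simp; omega))
      have hR : (upos d z k).erase ((z, (⟨k, hk⟩ : Fin d)), true) ∪
          T.erase ((z, (⟨k, hk⟩ : Fin d)), false) = upos d z (k + 1) := by
        rw [upos_erase hk, hT, Finset.erase_singleton, Finset.union_empty]
      rw [hR] at r2
      have hTne : ∀ m, T ≠ upos d z m :=
        fun m => ne_of_negLit (posOnly_upos z) (Finset.mem_singleton_self _)
      have r3 := reach_delete (F := pebCnf G d) (s := s) (D := T)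
        (C := insert (upos d z (k + 1)) (insert T {upos d z k}))
        (Finset.mem_insert_of_mem (Finset.mem_insert_self _ _))
        (le_trans (card_insert2_le _ _ _) (by simp; omega))
      have he3 : (insert (upos d z (k + 1)) (insert T ({upos d z k} : RConfig (V × Fin d)))).erase T
          = insert (upos d z (k + 1)) {upos d z k} := by
        ext x
        simp only [Finset.mem_erase, Finset.mem_insert, Finset.mem_singleton]
        constructor
        · rintro ⟨hne, h | h | h⟩ <;> tauto
        · rintro (rfl | rfl)
          · exact ⟨(hTne (k + 1)).symm, Or.inl rfl⟩
          · exact ⟨(hTne k).symm, Or.inr (Or.inr rfl)⟩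
      rw [he3] at r3
      have r4 := reach_delete (F := pebCnf G d) (s := s) (D := upos d z k)
        (C := insert (upos d z (k + 1)) {upos d z k})
        (Finset.mem_insert_of_mem (Finset.mem_singleton_self _))
        (le_trans (card_insert1_le _ _) (by simp; omega))
      have he4 : (insert (upos d z (k + 1)) ({upos d z k} : RConfig (V × Fin d))).erase (upos d z k)
          = {upos d z (k + 1)} := by
        ext x
        simp only [Finset.mem_erase, Finset.mem_insert, Finset.mem_singleton]
        constructor
        · rintro ⟨hne, h | h⟩ <;> tauto
        · rintro rfl
          exact ⟨(upos_ne_succ hk z).symm, Or.inl rfl⟩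
      rw [he4] at r4
      exact ((r0.trans r1).trans r2).trans (r3.trans r4)
  have := key d (le_refl d)
  rwa [upos_top] at this

end Aux6
section Aux7

variable {V : Type} [DecidableEq V]

lemma reflTransGen_chain {α : Type*} {r : α → α → Prop} {a b : α}
    (h : Relation.ReflTransGen r a b) :
    ∃ n : ℕ, ∃ f : ℕ → α, f 0 = a ∧ f n = b ∧ ∀ t < n, r (f t) (f (t + 1)) := by
  induction h with
  | refl => exact ⟨0, fun _ => a, rfl, rfl, by omega⟩
  | @tail b c hab hbc ih =>
    obtain ⟨n, f, h0, hn, hs⟩ := ih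
    refine ⟨n + 1, fun t => if t ≤ n then f t else c, by simp [h0], by simp, ?_⟩
    intro t ht
    rcases Nat.lt_or_ge t n with h' | h'
    · simpa [Nat.le_of_lt h', Nat.succ_le_of_lt h'] using hs t h'
    · have : t = n := by omega
      subst this
      simpa [hn] using hbc

lemma pebble_reach (G : PebDag V) (v : V) :
    ∀ B : Finset V, ∃ B', B ⊆ B' ∧ v ∈ B' ∧ Relation.ReflTransGen (BMove G.pred) B B' := by
  refine G.wf.induction
    (C := fun v => ∀ B : Finset V,
      ∃ B', B ⊆ B' ∧ v ∈ B' ∧ Relation.ReflTransGen (BMove G.pred) B B') v ?_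
  intro v ih B
  rcases G.indeg v with h0 | h2
  · have hp : G.pred v = ∅ := Finset.card_eq_zero.1 h0
    exact ⟨insert v B, Finset.subset_insert _ _, Finset.mem_insert_self _ _,
      Relation.ReflTransGen.single (BMove.place (by rw [hp]; exact Finset.empty_subset _))⟩
  · obtain ⟨u, u', huu, hp⟩ := Finset.card_eq_two.1 h2
    have hu : u ∈ G.pred v := by rw [hp]; exact Finset.mem_insert_self _ _
    have hu' : u' ∈ G.pred v := by rw [hp]; simp
    obtain ⟨B1, hB1, huB1, r1⟩ := ih u hu B
    obtain ⟨B2, hB2, huB2, r2⟩ := ih u' hu' B1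
    have hsub : G.pred v ⊆ B2 := by
      rw [hp]
      intro x hx
      rcases Finset.mem_insert.1 hx with rfl | hx
      · exact hB2 huB1
      · rwa [Finset.mem_singleton.1 hx]
    exact ⟨insert v B2, fun x hx => Finset.mem_insert_of_mem (hB2 (hB1 hx)),
      Finset.mem_insert_self _ _, (r1.trans r2).tail (BMove.place hsub)⟩

lemma erase_down (G : PebDag V) (B : Finset V) (hz : G.sink ∈ B) :
    Relation.ReflTransGen (BMove G.pred) B {G.sink} := by
  induction B using Finset.strongInduction with
  | _ B ih =>
    by_cases hB : B = {G.sink}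
    · rw [hB]
    · have : ∃ y ∈ B, y ≠ G.sink := by
        by_contra hcon
        push_neg at hcon
        exact hB (Finset.eq_singleton_iff_unique_mem.2 ⟨hz, hcon⟩)
      obtain ⟨y, hy, hyz⟩ := this
      exact Relation.ReflTransGen.head (BMove.remove hy)
        (ih (B.erase y) (Finset.erase_ssubset hy) (Finset.mem_erase.2 ⟨Ne.symm hyz, hz⟩))

lemma exists_pebbling (G : PebDag V) : ∃ P : BPebbling G.pred G.sink, True := by
  obtain ⟨B', _, hzB', r1⟩ := pebble_reach G G.sink (∅ : Finset V)
  have r2 := erase_down G B' hzB'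
  obtain ⟨n, f, h0, hn, hs⟩ := reflTransGen_chain (r1.trans r2)
  exact ⟨⟨n, f, h0, hn, hs⟩, trivial⟩

end Aux7
section Aux8

variable {V : Type} [DecidableEq V]

lemma reach_to_space_bound {d s : ℕ} {G : PebDag V}
    (h : Reach (pebCnf G d) s (∅ : RConfig (V × Fin d)) ({∅} : RConfig (V × Fin d))) :
    spMin (pebCnf G d) ≤ s := by
  obtain ⟨n, f, h0, hn, hs⟩ := reflTransGen_chain h
  refine le_trans
    (Nat.sInf_le ⟨⟨n, f, h0, hn, fun t ht => (hs t ht).1⟩, rfl⟩) ?_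
  apply Finset.sup_le
  intro t ht
  rcases t with _ | t'
  · show (f 0).card ≤ s
    rw [h0]; simp
  · show (f (t' + 1)).card ≤ s
    exact (hs t' (Nat.lt_of_succ_lt_succ (Finset.mem_range.1 ht))).2

lemma main_bound {G : PebDag V} {d : ℕ} (hd : 0 < d) :
    spMin (pebCnf G d) ≤ bPebPrice G.pred G.sink + 4 := by
  obtain ⟨P0, -⟩ := exists_pebbling G
  have hne : {c | ∃ P : BPebbling G.pred G.sink, P.cost = c}.Nonempty := ⟨P0.cost, P0, rfl⟩
  obtain ⟨P, hP⟩ := Nat.sInf_mem hne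
  have hcard : ∀ t, t ≤ P.len → (P.cfg t).card ≤ P.cost := by
    intro t ht
    show (P.cfg t).card ≤ (Finset.range (P.len + 1)).sup fun t => (P.cfg t).card
    exact Finset.le_sup (f := fun t => (P.cfg t).card)
      (Finset.mem_range.2 (show t < P.len + 1 by omega))
  have sim : ∀ t, t ≤ P.len →
      Reach (pebCnf G d) (P.cost + 4) (conf d (P.cfg 0)) (conf d (P.cfg t)) := by
    intro t
    induction t with
    | zero => intro _; exact reach_refl
    | succ t ih =>
      intro ht
      have r1 := ih (by omega)
      have hb : (P.cfg t).card + 4 ≤ P.cost + 4 := by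
        have := hcard t (by omega); omega
      have r2 := move_sim (d := d) hd (P.steps t (by omega)) hb
      exact r1.trans r2
  have r := sim P.len (le_refl _)
  rw [P.init, P.final, conf_empty] at r
  have hsingle : conf d ({G.sink} : Finset V) = {posCl d G.sink} := Finset.image_singleton _ _
  rw [hsingle] at r
  have r2 := endgame (G := G) (d := d) (s := P.cost + 4) hd (by omega)
  have hfin := reach_to_space_bound (r.trans r2)
  unfold bPebPrice
  rw [← hP]
  exact hfin

end Aux8

/-- There is an absolute constant `c` such that for any DAG
`G` with a unique sink and all vertices of indegree 0 or 2, and any `d ≥ 1`,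
the minimum clause space of a resolution refutation of `Peb_G^d` is at most
`Peb(G) + c`, where `Peb(G)` is the black pebbling price of `G`. -/
theorem clause_space_le_black_pebbling_price :
    ∃ c : ℕ, 0 < c ∧
      ∀ (V : Type) [DecidableEq V] (G : PebDag V) (d : ℕ), 1 ≤ d →
        spMin (pebCnf G d) ≤ bPebPrice G.pred G.sink + c := by
  exact ⟨4, by omega, fun V _ G d hd => main_bound hd⟩
end

section
/- Let B, W, U be vertex sets in a layered spreading DAG G such that U ∪ W hides B and U ∪ W is tight and hiding-connected. Then there exists a vertex set U* such that U* ∪ W hides B, U* ≾_m U, and either U* = B or |U*| < |B| + |W|. -/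
/-- A layered DAG: vertices are partitioned into levels `0, 1, ..., height`,
every edge goes from some level `L - 1` to level `L` (`pred v` is the finite
set of immediate predecessors of `v`), all sources are on level `0`, and there
is a unique sink, located on the top level. -/
structure LGraph (V : Type) where
  pred : V → Finset V
  height : ℕ
  lvl : V → ℕ
  lvl_le : ∀ v, lvl v ≤ height
  edge_lvl : ∀ u v, u ∈ pred v → lvl v = lvl u + 1
  source_lvl : ∀ v, pred v = ∅ ↔ lvl v = 0
  sink : V
  sink_unique : ∀ v, (∀ w, v ∉ pred w) ↔ v = sink
  sink_lvl : lvl sink = height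
/-- `l` is a path from a source to `w` (in a graph given by its immediate
predecessor function `pred`): consecutive vertices are joined by edges, the
first vertex is a source, and the last vertex is `w`. -/
def IsSourcePath {V : Type} (pred : V → Finset V) (l : List V) (w : V) : Prop :=
  l.Chain' (fun a b => a ∈ pred b) ∧ (∃ s, l.head? = some s ∧ pred s = ∅) ∧
    l.getLast? = some w

/-- A vertex set `U` hides the vertex `w` if every path from a source to `w`
intersects `U`. -/
def Hides {V : Type} (pred : V → Finset V) (U : Set V) (w : V) : Prop :=
  ∀ l : List V, IsSourcePath pred l w → ∃ u ∈ U, u ∈ l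

/-- `U` hides the vertex set `B` if it hides every vertex of `B`. -/
def HidesSet {V : Type} (pred : V → Finset V) (U B : Set V) : Prop :=
  ∀ w ∈ B, Hides pred U w

/-- `Reaches pred u v` : the vertex `v` is reachable from `u`. -/
def Reaches {V : Type} (pred : V → Finset V) : V → V → Prop :=
  Relation.ReflTransGen fun a b => a ∈ pred b
/-- The `j`-th partial measure of a vertex set `U` in a layered DAG:
`j + 2·|U^{≥j}|` if the part `U^{≥j}` of `U` on level `j` or higher is
nonempty, and `0` otherwise. -/
def mjMeasure {V : Type} (G : LGraph V) (U : Finset V) (j : ℕ) : ℕ :=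
  if (U.filter fun u => j ≤ G.lvl u).Nonempty then
    j + 2 * (U.filter fun u => j ≤ G.lvl u).card
  else 0

/-- The measure of a vertex set `U`: the maximum of its partial measures. -/
def klMeasure {V : Type} (G : LGraph V) (U : Finset V) : ℕ :=
  (Finset.range (G.height + 1)).sup (mjMeasure G U)

/-- The potential of a black-white pebble configuration `(B, W)`: the minimum
measure of a vertex set `U` such that `U ∪ W` hides `B`. -/
noncomputable def pot {V : Type} [DecidableEq V] (G : LGraph V) (B W : Finset V) : ℕ :=
  sInf { m | ∃ U : Finset V, HidesSet G.pred (↑(U ∪ W)) (↑B) ∧ klMeasure G U = m }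
/-- A vertex set `X` is tight if no `u ∈ X` is hidden by `X \ {u}`. -/
def Tight {V : Type} [DecidableEq V] (G : LGraph V) (X : Finset V) : Prop :=
  ∀ u ∈ X, ¬ Hides G.pred (↑(X.erase u)) u

/-- The set of all vertices hidden by `X`. -/
def hiddenSet {V : Type} (G : LGraph V) (X : Finset V) : Set V :=
  { w | Hides G.pred (↑X) w }

/-- `X⌈x⌉`: the set of `u ∈ X` such that some source path to `x` intersects
`X` exactly in `{u}`. -/
def nhsSet {V : Type} [DecidableEq V] (G : LGraph V) (X : Finset V) (x : V) : Set V :=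
  { u | u ∈ X ∧ ∃ l : List V, IsSourcePath G.pred l x ∧ u ∈ l ∧ ∀ y ∈ X, y ∈ l → y = u }

/-- The edge relation of the hiding set graph `H(G, X)`: vertices `x, y` (both
hidden by `X`) are adjacent when the set of vertices below `x` hidden by
`X⌈x⌉` intersects the set of vertices below `y` hidden by `X⌈y⌉`. -/
def HSAdj {V : Type} [DecidableEq V] (G : LGraph V) (X : Finset V) (x y : V) : Prop :=
  x ∈ hiddenSet G X ∧ y ∈ hiddenSet G X ∧
    ∃ w, Reaches G.pred w x ∧ Hides G.pred (nhsSet G X x) w ∧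
      Reaches G.pred w y ∧ Hides G.pred (nhsSet G X y) w

/-- `X` is hiding-connected if the hiding set graph `H(G, X)` is connected. -/
def HidingConnected {V : Type} [DecidableEq V] (G : LGraph V) (X : Finset V) : Prop :=
  ∀ x ∈ hiddenSet G X, ∀ y ∈ hiddenSet G X, Relation.ReflTransGen (HSAdj G X) x y

/-- `h_j(Y)`: the minimum size of a vertex set with all vertices on level `j`
or higher hiding every vertex of `Y` on level `j` or higher. -/
noncomputable def hLevel {V : Type} (G : LGraph V) (j : ℕ) (Y : Set V) : ℕ :=
  sInf { n | ∃ Z : Finset V, (∀ z ∈ Z, j ≤ G.lvl z) ∧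
      (∀ y ∈ Y, j ≤ G.lvl y → Hides G.pred (↑Z) y) ∧ Z.card = n }

/-- The lowest level of any vertex in `X`. -/
noncomputable def minLvl {V : Type} (G : LGraph V) (X : Finset V) : ℕ :=
  sInf (G.lvl '' (↑X : Set V))

/-- The highest level of any vertex hidden by `X`. -/
noncomputable def maxLvlHidden {V : Type} (G : LGraph V) (X : Finset V) : ℕ :=
  sSup (G.lvl '' hiddenSet G X)

/-- A layered DAG is a spreading graph if for every (nonempty) hiding-connected
tight vertex set `X` and every level `j` with `1 ≤ j ≤ maxlevel(hidden(X))`,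
the spreading inequality `|X| ≥ h_j(hidden(X)) + j − minlevel(X)` holds. -/
def Spreading {V : Type} [DecidableEq V] (G : LGraph V) : Prop :=
  ∀ X : Finset V, X.Nonempty → Tight G X → HidingConnected G X →
    ∀ j : ℕ, 1 ≤ j → j ≤ maxLvlHidden G X →
      hLevel G j (hiddenSet G X) + j ≤ X.card + minLvl G X

/-- `U ≾_m V`: for every `j ≥ 0` there is some `i ≤ j` with
`m_j(U) ≤ m_i(V)`. -/
def MLe {V : Type} (G : LGraph V) (U W : Finset V) : Prop :=
  ∀ j : ℕ, ∃ i ≤ j, mjMeasure G U j ≤ mjMeasure G W i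


/-!
If `|U| < |B| + |W|`, take `U* = U`. Otherwise take for `U*` a smallest set `Z` hiding `B`
(namely `B` itself unless some smaller set does). Minimality makes `Z` nested: its part on levels
`≥ j` has at most `h_j(B)` elements, since otherwise replacing it by an optimal hiding set for the
levels `≥ j` would give a smaller hiding set. Comparing `m_j(Z)` with `m_i(U)` for
`i = min j m`, where `m` is the lowest level of `U ∪ W`, the budget `|U| ≥ |B| + |W|` settles the
levels `j < m + 2|W|`, and above them the spreading inequality
`h_j(B) + j ≤ h_j(hidden(U ∪ W)) + j ≤ |U| + |W| + m` does.
-/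

namespace LGraph

variable {V : Type} (G : LGraph V)

theorem eq_sink_of_lvl_eq_height {v : V} (h : G.lvl v = G.height) : v = G.sink := by
  refine (G.sink_unique v).mp fun w hw => ?_
  have := G.edge_lvl v w hw
  have := G.lvl_le w
  omega

theorem finite_setOf_lvl_add_eq_height (n : ℕ) : {v | G.lvl v + n = G.height}.Finite := by
  induction n with
  | zero => exact (Set.finite_singleton G.sink).subset fun v hv => G.eq_sink_of_lvl_eq_height hv
  | succ n ih =>
    refine (ih.biUnion fun w _ => (G.pred w).finite_toSet).subset fun v (hv : _ = _) => ?_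
    obtain ⟨w, hw⟩ : ∃ w, v ∈ G.pred w := by
      by_contra! h
      have := G.sink_lvl
      rw [(G.sink_unique v).mp h] at hv
      omega
    have := G.edge_lvl v w hw
    exact Set.mem_biUnion (x := w) (by change _ = _; omega) hw

theorem finite (G : LGraph V) : Finite V := by
  refine Set.finite_univ_iff.mp <| ((Set.finite_le_nat G.height).biUnion
    fun n _ => G.finite_setOf_lvl_add_eq_height n).subset fun v _ => ?_
  have := G.lvl_le v
  exact Set.mem_biUnion (x := G.height - G.lvl v) (Nat.sub_le _ _) (by change _ = _; omega)

theorem lvl_le_of_mem_of_isSourcePath {l : List V} {v w : V} (hl : IsSourcePath G.pred l w)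
    (hv : v ∈ l) : G.lvl v ≤ G.lvl w := by
  refine hl.1.backwards_induction (G.lvl · ≤ G.lvl w) l (fun a b hab hb => ?_) (fun hne => ?_) v hv
  · have := G.edge_lvl a b hab
    omega
  · rw [List.getLast_of_mem_getLast? hl.2.2]

end LGraph

section Hiding

variable {V : Type} {pred : V → Finset V}

theorem hides_of_mem {U : Set V} {w : V} (hw : w ∈ U) : Hides pred U w := fun _ hl =>
  ⟨w, hw, List.mem_of_getLast? hl.2.2⟩

theorem Hides.mono {U U' : Set V} {w : V} (h : Hides pred U w) (hUU' : U ⊆ U') :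
    Hides pred U' w := fun l hl =>
  let ⟨u, hu, hul⟩ := h l hl
  ⟨u, hUU' hu, hul⟩

end Hiding

section HLevel

variable {V : Type} (G : LGraph V) (j : ℕ)

theorem hLevel_le_card {Y : Set V} {Z : Finset V} (hZ : ∀ z ∈ Z, j ≤ G.lvl z)
    (hYZ : ∀ y ∈ Y, j ≤ G.lvl y → Hides G.pred ↑Z y) : hLevel G j Y ≤ Z.card :=
  Nat.sInf_le ⟨Z, hZ, hYZ, rfl⟩

theorem hLevel_zero_le_card {Y : Set V} {Z : Finset V} (hYZ : HidesSet G.pred ↑Z Y) :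
    hLevel G 0 Y ≤ Z.card :=
  hLevel_le_card G 0 (fun _ _ => Nat.zero_le _) fun y hy _ => hYZ y hy

theorem hLevel_coe_le_card (B : Finset V) : hLevel G j ↑B ≤ B.card :=
  (hLevel_le_card G j (Z := B.filter (j ≤ G.lvl ·)) (fun _ hz => (Finset.mem_filter.mp hz).2)
    fun _ hy hjy => hides_of_mem (by simpa using And.intro hy hjy)).trans
    (Finset.card_filter_le _ _)

theorem exists_le_lvl_of_hLevel_pos {Y : Set V} (h : 0 < hLevel G j Y) :
    ∃ y ∈ Y, j ≤ G.lvl y := by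
  by_contra! hY
  exact h.not_ge <| hLevel_le_card G j (Z := ∅) (by simp) fun y hy hjy => absurd hjy (hY y hy).not_ge

variable [Finite V]

theorem exists_card_eq_hLevel (Y : Set V) : ∃ Z : Finset V, (∀ z ∈ Z, j ≤ G.lvl z) ∧
    (∀ y ∈ Y, j ≤ G.lvl y → Hides G.pred ↑Z y) ∧ Z.card = hLevel G j Y := by
  have hne : {n | ∃ Z : Finset V, (∀ z ∈ Z, j ≤ G.lvl z) ∧
      (∀ y ∈ Y, j ≤ G.lvl y → Hides G.pred ↑Z y) ∧ Z.card = n}.Nonempty :=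
    ⟨_, (Set.toFinite (Y ∩ {y | j ≤ G.lvl y})).toFinset, fun _ hz => by simp_all,
      fun _ hy hjy => hides_of_mem (by simpa using And.intro hy hjy), rfl⟩
  exact Nat.sInf_mem hne

theorem hLevel_mono {Y Y' : Set V} (h : Y ⊆ Y') : hLevel G j Y ≤ hLevel G j Y' := by
  obtain ⟨Z, hZ, hY'Z, hcard⟩ := exists_card_eq_hLevel G j Y'
  exact hcard ▸ hLevel_le_card G j hZ fun y hy => hY'Z y (h hy)

theorem card_filter_le_hLevel [DecidableEq V] {Y : Set V} {Z : Finset V}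
    (hYZ : HidesSet G.pred ↑Z Y) (hmin : Z.card = hLevel G 0 Y) :
    (Z.filter (j ≤ G.lvl ·)).card ≤ hLevel G j Y := by
  obtain ⟨Zj, -, hYZj, hcard⟩ := exists_card_eq_hLevel G j Y
  have hY : HidesSet G.pred ↑(Z.filter (¬ j ≤ G.lvl ·) ∪ Zj) Y := by
    intro y hy
    by_cases hjy : j ≤ G.lvl y
    · exact (hYZj y hy hjy).mono (by simp)
    · intro l hl
      obtain ⟨z, hz, hzl⟩ := hYZ y hy l hl
      have := G.lvl_le_of_mem_of_isSourcePath hl hzl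
      exact ⟨z, by simp_all; omega, hzl⟩
  have := hLevel_zero_le_card G hY
  have := Finset.card_union_le (Z.filter (¬ j ≤ G.lvl ·)) Zj
  have := Finset.card_filter_add_card_filter_not (s := Z) (j ≤ G.lvl ·)
  omega

theorem exists_hidesSet_card_eq_hLevel_zero (B : Finset V) :
    ∃ Z : Finset V, HidesSet G.pred ↑Z ↑B ∧ Z.card = hLevel G 0 ↑B ∧
      (Z = B ∨ Z.card < B.card) := by
  rcases (hLevel_coe_le_card G 0 B).eq_or_lt with h | h
  · exact ⟨B, fun _ hb => hides_of_mem hb, h.symm, Or.inl rfl⟩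
  · obtain ⟨Z, -, hBZ, hcard⟩ := exists_card_eq_hLevel G 0 ↑B
    exact ⟨Z, fun b hb => hBZ b hb (Nat.zero_le _), hcard, Or.inr (hcard ▸ h)⟩

theorem Spreading.hLevel_add_le [DecidableEq V] (hG : Spreading G) {X : Finset V}
    (hX : X.Nonempty) (htight : Tight G X) (hconn : HidingConnected G X) {Y : Set V}
    (hY : Y ⊆ hiddenSet G X) (hj : 1 ≤ j) (hpos : 0 < hLevel G j Y) :
    hLevel G j Y + j ≤ X.card + minLvl G X := by
  obtain ⟨y, hy, hjy⟩ := exists_le_lvl_of_hLevel_pos G j hpos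
  have hjmax : j ≤ maxLvlHidden G X := hjy.trans <|
    le_csSup ⟨G.height, by rintro _ ⟨v, -, rfl⟩; exact G.lvl_le v⟩ ⟨y, hY hy, rfl⟩
  have := hLevel_mono G j hY
  have := hG X hX htight hconn j hj hjmax
  omega

end HLevel

section Measure

variable {V : Type} (G : LGraph V)

theorem mjMeasure_of_forall_le {U : Finset V} {i : ℕ} (hU : U.Nonempty)
    (h : ∀ u ∈ U, i ≤ G.lvl u) : mjMeasure G U i = i + 2 * U.card := by
  rw [mjMeasure, Finset.filter_true_of_mem h, if_pos hU]

theorem mLe_of_forall_le_min {Z U : Finset V} {m : ℕ} (hm : ∀ u ∈ U, m ≤ G.lvl u)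
    (h : ∀ j, (Z.filter (j ≤ G.lvl ·)).Nonempty →
      j + 2 * (Z.filter (j ≤ G.lvl ·)).card ≤ min j m + 2 * U.card) :
    MLe G Z U := by
  intro j
  by_cases hne : (Z.filter (j ≤ G.lvl ·)).Nonempty
  · obtain ⟨z, hz⟩ := hne
    have hne0 : (Z.filter (0 ≤ G.lvl ·)).Nonempty := ⟨z, by simp_all⟩
    have hU : U.Nonempty := by
      have := h 0 hne0
      have := hne0.card_pos
      exact Finset.card_pos.mp (by omega)
    refine ⟨min j m, min_le_left j m, ?_⟩
    rw [mjMeasure, if_pos ⟨z, hz⟩,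
      mjMeasure_of_forall_le G hU fun u hu => (min_le_right j m).trans (hm u hu)]
    exact h j ⟨z, hz⟩
  · exact ⟨j, le_rfl, by simp [mjMeasure, hne]⟩

end Measure

/-- Let `B, W, U` be vertex sets in a layered spreading DAG
`G` such that `U ∪ W` hides `B` and `U ∪ W` is tight and hiding-connected.
Then there exists a vertex set `U*` such that `U* ∪ W` hides `B`,
`U* ≾_m U`, and either `U* = B` or `|U*| < |B| + |W|`. -/
theorem local_limited_hiding_cardinality {V : Type} [DecidableEq V]
    (G : LGraph V) (hspread : Spreading G) (B W U : Finset V)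
    (hhide : HidesSet G.pred (↑(U ∪ W)) (↑B))
    (htight : Tight G (U ∪ W))
    (hconn : HidingConnected G (U ∪ W)) :
    ∃ Ust : Finset V,
      HidesSet G.pred (↑(Ust ∪ W)) (↑B) ∧ MLe G Ust U ∧
      (Ust = B ∨ Ust.card < B.card + W.card) := by
  have := G.finite
  by_cases hcard : U.card < B.card + W.card
  · exact ⟨U, hhide, fun j => ⟨j, le_rfl, le_rfl⟩, Or.inr hcard⟩
  obtain ⟨Z, hBZ, hZmin, hZB⟩ := exists_hidesSet_card_eq_hLevel_zero G B
  refine ⟨Z, fun b hb => (hBZ b hb).mono (by simp), ?_, hZB.imp_right (by omega)⟩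
  have hm : ∀ u ∈ U, minLvl G (U ∪ W) ≤ G.lvl u := fun u hu =>
    Nat.sInf_le ⟨u, by simp [hu], rfl⟩
  refine mLe_of_forall_le_min G hm fun j hj => ?_
  have hZj := card_filter_le_hLevel G j hBZ hZmin
  have hBj := hLevel_coe_le_card G j B
  have hpos : 0 < hLevel G j ↑B := hj.card_pos.trans_le hZj
  have := Finset.card_union_le U W
  rcases Nat.eq_zero_or_pos j with rfl | hj1
  · omega
  have hX : (U ∪ W).Nonempty := (Finset.card_pos.mp (by omega : 0 < U.card)).mono (by simp)
  have := hspread.hLevel_add_le G j hX htight hconn (fun b hb => hhide b hb) hj1 hpos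
  omega
end
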